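/- Let ρ* := (3/10)·( ((√5 − 1)/2)^{1/3} − 1 − (2/(√5 − 1))^{1/3} ), and take ρ = ρ*. Then the random variable X := 10·U + V³ − 3·V satisfies E[X⁴] = 3·E[X²]² (i.e., its fourth cumulant κ₄(X) vanishes), but E[X⁶] ≠ 15·E[X²]³; in particular, the law of X is not equal to any Gaussian measure on ℝ, so X is not Gaussian. (This shows the fourth-moment theorem fails for a sum of elements of the first and third Wiener chaoses.) -/

import Mathlib

/-
Write `V = ρ U + s W` with `s = √(1 - ρ²)`. Expanding `X = 10 U + (V³ - 3 V)` binomially reduces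
every moment of `X` to products of standard Gaussian moments `E[Z^n]` (`(n-1)!!` or `0`); odd
powers of `s` only meet odd moments, which vanish, so the moments are polynomials in `ρ`:
`E[X²] = 106`, `κ₄(X) = 24 (1000ρ³ + 900ρ² + 540ρ + 135)` and
`E[X⁶] - 15·106³ = 20412000 (ρ + 9/20)² + 2369250 + (32400ρ + 73800)(1000ρ³ + 900ρ² + 540ρ + 135)`.
The given `ρ` is Cardano's root of that cubic: `t = 10ρ/3 + 1 = a - a⁻¹` with `a³ = (√5 - 1)/2`
solves `t³ + 3t + 1 = 0`. So `κ₄(X) = 0` while the sixth-moment gap is positive, and a Gaussian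
law for `X` would be `N(0, 106)`, whose sixth moment is `15·106³`.
-/

open MeasureTheory ProbabilityTheory Real

namespace ProbabilityTheory

noncomputable def gaussianMoment : ℕ → ℝ
  | 0 => 1
  | 1 => 0
  | n + 2 => (n + 1) * gaussianMoment n

lemma gaussianMoment_two_mul_add_one (k : ℕ) : gaussianMoment (2 * k + 1) = 0 := by
  induction k with
  | zero => rfl
  | succ k ih => simp [show 2 * (k + 1) + 1 = 2 * k + 1 + 2 by ring, gaussianMoment, ih]

lemma gaussianMoment_mul_pow (n : ℕ) (c : ℝ) :
    gaussianMoment n * c ^ n = gaussianMoment n * (c ^ 2) ^ (n / 2) := by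
  obtain ⟨k, rfl | rfl⟩ := Nat.even_or_odd' n
  · rw [← pow_mul, Nat.mul_div_cancel_left k two_pos]
  · simp [gaussianMoment_two_mul_add_one]

lemma integrable_pow_gaussianReal (μ : ℝ) (v : NNReal) (n : ℕ) :
    Integrable (fun x ↦ x ^ n) (gaussianReal μ v) :=
  integrable_pow_of_mem_interior_integrableExpSet (X := id)
    (by simp [integrableExpSet_id_gaussianReal]) n

lemma integrable_gaussianPDFReal_zero_one_mul_pow (n : ℕ) :
    Integrable (fun x ↦ gaussianPDFReal 0 1 x * x ^ n) := by
  have h := integrable_pow_gaussianReal 0 1 n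
  rw [gaussianReal_of_var_ne_zero _ one_ne_zero, integrable_withDensity_iff_integrable_smul'
    (measurable_gaussianPDF 0 1) (ae_of_all _ fun _ ↦ gaussianPDF_lt_top)] at h
  simpa [toReal_gaussianPDF] using h

lemma hasDerivAt_gaussianPDFReal_zero_one (x : ℝ) :
    HasDerivAt (gaussianPDFReal 0 1) (-x * gaussianPDFReal 0 1 x) x := by
  have hpdf : gaussianPDFReal 0 1 = fun y ↦ (√(2 * π))⁻¹ * rexp (-(y ^ 2 / 2)) := by
    ext y; simp [gaussianPDFReal, neg_div]
  have h : HasDerivAt (fun y : ℝ ↦ -(y ^ 2 / 2)) (-x) x := by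
    simpa using ((hasDerivAt_pow 2 x).div_const 2).fun_neg
  rw [hpdf]
  exact (h.exp.const_mul _).congr_deriv (by ring)

lemma integral_pow_add_two_gaussianReal_zero_one (n : ℕ) :
    ∫ x, x ^ (n + 2) ∂gaussianReal 0 1 = (n + 1) * ∫ x, x ^ n ∂gaussianReal 0 1 := by
  simp only [integral_gaussianReal_eq_integral_smul one_ne_zero, smul_eq_mul]
  have hint := integrable_gaussianPDFReal_zero_one_mul_pow
  have hderiv (x : ℝ) : HasDerivAt (fun y ↦ gaussianPDFReal 0 1 y * y ^ (n + 1))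
      ((n + 1) * (gaussianPDFReal 0 1 x * x ^ n) - gaussianPDFReal 0 1 x * x ^ (n + 2)) x := by
    refine ((hasDerivAt_gaussianPDFReal_zero_one x).fun_mul
      (hasDerivAt_pow (n + 1) x)).congr_deriv ?_
    push_cast
    ring
  have h := integral_eq_zero_of_hasDerivAt_of_integrable hderiv
    (((hint n).const_mul _).sub (hint (n + 2))) (hint (n + 1))
  rw [integral_sub ((hint n).const_mul _) (hint (n + 2)), integral_const_mul] at h
  linarith

lemma integral_pow_gaussianReal_zero_one (n : ℕ) :
    ∫ x, x ^ n ∂gaussianReal 0 1 = gaussianMoment n := by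
  induction n using Nat.strong_induction_on with
  | _ n ih =>
    match n with
    | 0 => simp [gaussianMoment]
    | 1 => simp [gaussianMoment]
    | n + 2 => rw [integral_pow_add_two_gaussianReal_zero_one, ih n (by omega), gaussianMoment]

lemma integral_pow_gaussianReal_zero (v : NNReal) (n : ℕ) :
    ∫ x, x ^ n ∂gaussianReal 0 v = gaussianMoment n * v ^ (n / 2) := by
  have h : (gaussianReal 0 1).map (√(v : ℝ) * ·) = gaussianReal 0 v := by
    rw [gaussianReal_map_const_mul]
    congr 1
    · simp
    · ext; simp
  rw [← h, integral_map (by fun_prop) (by fun_prop)]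
  simp_rw [mul_pow]
  rw [integral_const_mul, integral_pow_gaussianReal_zero_one, mul_comm, gaussianMoment_mul_pow,
    Real.sq_sqrt v.coe_nonneg]

local notation "γ₂" => Measure.prod (gaussianReal 0 1) (gaussianReal 0 1)

lemma integrable_fst_pow_mul_snd_pow (i j : ℕ) :
    Integrable (fun z : ℝ × ℝ ↦ z.1 ^ i * z.2 ^ j) γ₂ :=
  (integrable_pow_gaussianReal 0 1 i).mul_prod (integrable_pow_gaussianReal 0 1 j)

lemma integral_fst_pow_mul_snd_pow (i j : ℕ) :
    ∫ z : ℝ × ℝ, z.1 ^ i * z.2 ^ j ∂γ₂ = gaussianMoment i * gaussianMoment j := by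
  rw [integral_prod_mul (f := fun x ↦ x ^ i) (g := fun y ↦ y ^ j),
    integral_pow_gaussianReal_zero_one, integral_pow_gaussianReal_zero_one]

noncomputable def correlatedMoment (a c : ℝ) (j p : ℕ) : ℝ :=
  ∑ q ∈ Finset.range (p + 1), p.choose q * a ^ q * c ^ ((p - q) / 2) *
    (gaussianMoment (j + q) * gaussianMoment (p - q))

section Correlated

variable (a b : ℝ)

lemma fst_pow_mul_linear_pow_eq_sum (j p : ℕ) (z : ℝ × ℝ) :
    z.1 ^ j * (a * z.1 + b * z.2) ^ p =
      ∑ q ∈ Finset.range (p + 1),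
        p.choose q * a ^ q * b ^ (p - q) * (z.1 ^ (j + q) * z.2 ^ (p - q)) := by
  rw [add_pow, Finset.mul_sum]
  refine Finset.sum_congr rfl fun q _ ↦ ?_
  ring

lemma integrable_fst_pow_mul_linear_pow (j p : ℕ) :
    Integrable (fun z : ℝ × ℝ ↦ z.1 ^ j * (a * z.1 + b * z.2) ^ p) γ₂ := by
  simp_rw [fst_pow_mul_linear_pow_eq_sum]
  exact integrable_finsetSum _ fun q _ ↦ (integrable_fst_pow_mul_snd_pow _ _).const_mul _

lemma integral_fst_pow_mul_linear_pow (j p : ℕ) :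
    ∫ z : ℝ × ℝ, z.1 ^ j * (a * z.1 + b * z.2) ^ p ∂γ₂ = correlatedMoment a (b ^ 2) j p := by
  simp_rw [fst_pow_mul_linear_pow_eq_sum]
  rw [correlatedMoment,
    integral_finsetSum _ fun q _ ↦ (integrable_fst_pow_mul_snd_pow _ _).const_mul _]
  refine Finset.sum_congr rfl fun q _ ↦ ?_
  rw [integral_const_mul, integral_fst_pow_mul_snd_pow]
  linear_combination
    (p.choose q * a ^ q * gaussianMoment (j + q)) * gaussianMoment_mul_pow (p - q) b

noncomputable def chaosSum (z : ℝ × ℝ) : ℝ :=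
  10 * z.1 + (a * z.1 + b * z.2) ^ 3 - 3 * (a * z.1 + b * z.2)

lemma chaosSum_pow_eq_sum (k : ℕ) (z : ℝ × ℝ) :
    chaosSum a b z ^ k = ∑ j ∈ Finset.range (k + 1), ∑ i ∈ Finset.range (k - j + 1),
      k.choose j * 10 ^ j * (k - j).choose i * (-3) ^ (k - j - i) *
        (z.1 ^ j * (a * z.1 + b * z.2) ^ (k - j + 2 * i)) := by
  set v := a * z.1 + b * z.2
  rw [chaosSum, show 10 * z.1 + v ^ 3 - 3 * v = 10 * z.1 + (v ^ 3 + (-3) * v) by ring, add_pow]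
  refine Finset.sum_congr rfl fun j _ ↦ ?_
  rw [add_pow, Finset.mul_sum, Finset.sum_mul]
  refine Finset.sum_congr rfl fun i hi ↦ ?_
  have hi : i ≤ k - j := Nat.lt_succ_iff.mp (Finset.mem_range.mp hi)
  rw [show k - j + 2 * i = 3 * i + (k - j - i) by omega, pow_add, pow_mul, mul_pow, mul_pow]
  ring

lemma integral_chaosSum_pow (k : ℕ) :
    ∫ z, chaosSum a b z ^ k ∂γ₂ = ∑ j ∈ Finset.range (k + 1), ∑ i ∈ Finset.range (k - j + 1),
      k.choose j * 10 ^ j * (k - j).choose i * (-3) ^ (k - j - i) *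
        correlatedMoment a (b ^ 2) j (k - j + 2 * i) := by
  have hint (j p : ℕ) (c : ℝ) := (integrable_fst_pow_mul_linear_pow a b j p).const_mul c
  simp_rw [chaosSum_pow_eq_sum]
  rw [integral_finsetSum _ fun j _ ↦ integrable_finsetSum _ fun i _ ↦ hint _ _ _]
  refine Finset.sum_congr rfl fun j _ ↦ ?_
  rw [integral_finsetSum _ fun i _ ↦ hint _ _ _]
  refine Finset.sum_congr rfl fun i _ ↦ ?_
  rw [integral_const_mul, integral_fst_pow_mul_linear_pow]

end Correlated

section Moments

variable {a b : ℝ}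

lemma integral_chaosSum_pow_one (hab : b ^ 2 = 1 - a ^ 2) : ∫ z, chaosSum a b z ^ 1 ∂γ₂ = 0 := by
  rw [integral_chaosSum_pow, hab]
  norm_num [Finset.sum_range_succ, correlatedMoment, gaussianMoment, Nat.choose]

lemma integral_chaosSum_sq (hab : b ^ 2 = 1 - a ^ 2) : ∫ z, chaosSum a b z ^ 2 ∂γ₂ = 106 := by
  rw [integral_chaosSum_pow, hab]
  norm_num [Finset.sum_range_succ, correlatedMoment, gaussianMoment, Nat.choose]
  ring

lemma integral_chaosSum_pow_four (hab : b ^ 2 = 1 - a ^ 2) :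
    ∫ z, chaosSum a b z ^ 4 ∂γ₂ = 36948 + 12960 * a + 21600 * a ^ 2 + 24000 * a ^ 3 := by
  rw [integral_chaosSum_pow, hab]
  norm_num [Finset.sum_range_succ, correlatedMoment, gaussianMoment, Nat.choose]
  ring

set_option maxRecDepth 20000 in
lemma integral_chaosSum_pow_six (hab : b ^ 2 = 1 - a ^ 2) :
    ∫ z, chaosSum a b z ^ 6 ∂γ₂ =
      34330920 + 62596800 * a + 104328000 * a ^ 2 + 102960000 * a ^ 3 + 32400000 * a ^ 4 := by
  rw [integral_chaosSum_pow, hab]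
  norm_num [Finset.sum_range_succ, correlatedMoment, gaussianMoment, Nat.choose]
  ring

end Moments

lemma sub_inv_pow_three_add (a : ℝ) (ha : a ≠ 0) :
    (a - a⁻¹) ^ 3 + 3 * (a - a⁻¹) = a ^ 3 - (a ^ 3)⁻¹ := by
  field_simp
  ring

lemma cardano_root_cubic {ρ : ℝ}
    (hρ : ρ = 3 / 10 * (((√5 - 1) / 2) ^ ((1 : ℝ) / 3) - 1 - (2 / (√5 - 1)) ^ ((1 : ℝ) / 3))) :
    1000 * ρ ^ 3 + 900 * ρ ^ 2 + 540 * ρ + 135 = 0 := by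
  set φ := (√5 - 1) / 2
  have h5 : √5 ^ 2 = 5 := Real.sq_sqrt (by norm_num)
  have hφ : 0 < φ := by
    have : 1 < √5 := by nlinarith [Real.sqrt_nonneg 5]
    positivity
  have hφ_sub_inv : φ - φ⁻¹ = -1 := by
    field_simp
    linear_combination h5 / 4
  set a := φ ^ ((1 : ℝ) / 3)
  have ha : a ^ 3 = φ := by
    rw [← Real.rpow_natCast, ← Real.rpow_mul hφ.le]
    norm_num
  have hb : (2 / (√5 - 1)) ^ ((1 : ℝ) / 3) = a⁻¹ := by
    rw [← inv_div, Real.inv_rpow hφ.le]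
  have ht : (a - a⁻¹) ^ 3 + 3 * (a - a⁻¹) + 1 = 0 := by
    rw [sub_inv_pow_three_add a (by positivity), ha, hφ_sub_inv]
    ring
  rw [hρ, hb]
  linear_combination 27 * ht

lemma integral_pow_eq_of_map_eq_gaussianReal {Ω : Type*} [MeasurableSpace Ω] {μ : Measure Ω}
    {X : Ω → ℝ} (hX : AEMeasurable X μ) {v : NNReal} (h : μ.map X = gaussianReal 0 v) (n : ℕ) :
    ∫ ω, X ω ^ n ∂μ = gaussianMoment n * v ^ (n / 2) := by
  rw [← integral_pow_gaussianReal_zero, ← h, integral_map hX (by fun_prop)]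

end ProbabilityTheory

theorem stmt_9
    {Ω : Type*} [MeasurableSpace Ω] (μ : Measure Ω) [IsProbabilityMeasure μ]
    (U W : Ω → ℝ) (hUm : Measurable U) (hWm : Measurable W)
    (hUW : IndepFun U W μ)
    (hU : Measure.map U μ = gaussianReal 0 1)
    (hW : Measure.map W μ = gaussianReal 0 1)
    (ρ : ℝ) (hρ : ρ ∈ Set.Icc (-1 : ℝ) 1)
    (V : Ω → ℝ) (hV : ∀ ω, V ω = ρ * U ω + Real.sqrt (1 - ρ ^ 2) * W ω)
    (hρval : ρ = (3 / 10 : ℝ) * (((Real.sqrt 5 - 1) / 2) ^ ((1 : ℝ) / 3) - 1 - (2 / (Real.sqrt 5 - 1)) ^ ((1 : ℝ) / 3)))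
    (X : Ω → ℝ) (hX : ∀ ω, X ω = 10 * U ω + (V ω) ^ 3 - 3 * V ω) :
    (∫ ω, (X ω) ^ 4 ∂μ = 3 * (∫ ω, (X ω) ^ 2 ∂μ) ^ 2) ∧
    (∫ ω, (X ω) ^ 6 ∂μ ≠ 15 * (∫ ω, (X ω) ^ 2 ∂μ) ^ 3) ∧
    (∀ (m : ℝ) (v : NNReal), Measure.map X μ ≠ gaussianReal m v) := by
  set s := √(1 - ρ ^ 2)
  have hs : s ^ 2 = 1 - ρ ^ 2 := Real.sq_sqrt (by nlinarith [hρ.1, hρ.2])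
  have hcubic := cardano_root_cubic hρval
  have hXeq : X = chaosSum ρ s ∘ fun ω ↦ (U ω, W ω) := by
    funext ω
    simp only [Function.comp_apply, chaosSum, hX, hV]
  have hXm : Measurable X := by
    rw [hXeq]
    unfold chaosSum
    fun_prop
  have hlaw : μ.map (fun ω ↦ (U ω, W ω)) = (gaussianReal 0 1).prod (gaussianReal 0 1) := by
    rw [(indepFun_iff_map_prod_eq_prod_map_map hUm.aemeasurable hWm.aemeasurable).mp hUW, hU, hW]
  have hmoment (n : ℕ) :
      ∫ ω, X ω ^ n ∂μ = ∫ z, chaosSum ρ s z ^ n ∂(gaussianReal 0 1).prod (gaussianReal 0 1) := by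
    rw [← hlaw, integral_map (by fun_prop) (by unfold chaosSum; fun_prop), hXeq]
    rfl
  have E2 := (hmoment 2).trans (integral_chaosSum_sq hs)
  have E4 := (hmoment 4).trans (integral_chaosSum_pow_four hs)
  have E6 := (hmoment 6).trans (integral_chaosSum_pow_six hs)
  have hsixth : ∫ ω, X ω ^ 6 ∂μ ≠ 15 * (∫ ω, X ω ^ 2 ∂μ) ^ 3 := by
    have hgap : ∫ ω, X ω ^ 6 ∂μ - 15 * (∫ ω, X ω ^ 2 ∂μ) ^ 3 =
        20412000 * (ρ + 9 / 20) ^ 2 + 2369250 := by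
      rw [E6, E2]
      linear_combination (32400 * ρ + 73800) * hcubic
    intro h
    nlinarith [sq_nonneg (ρ + 9 / 20)]
  refine ⟨by rw [E4, E2]; linear_combination 24 * hcubic, hsixth, fun m v hXlaw ↦ hsixth ?_⟩
  obtain rfl : m = 0 := by
    rw [← integral_id_gaussianReal (μ := m) (v := v), ← hXlaw,
      integral_map hXm.aemeasurable (by fun_prop)]
    simpa using (hmoment 1).trans (integral_chaosSum_pow_one hs)
  rw [integral_pow_eq_of_map_eq_gaussianReal hXm.aemeasurable hXlaw,
    integral_pow_eq_of_map_eq_gaussianReal hXm.aemeasurable hXlaw]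
  norm_num [gaussianMoment]
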